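/- Let r be a positive integer and let (x^{(k)})_{1≤k≤r} and (y^{(k)})_{1≤k≤r} be two finite sequences of real numbers in [1, ∞). Write [x_{1,k}; x_{2,k}, …] for the continued fraction expansion of x^{(k)} and [y_{1,k}; y_{2,k}, …] for that of y^{(k)}. If for every k with 1 ≤ k ≤ r the first k partial quotients agree, i.e., x_{j,k} = y_{j,k} for j = 1, …, k, then Σ_{k=1}^{r} |log(x^{(k)}) − log(y^{(k)})| < 20/θ³, where θ = (1+√5)/2 is the golden ratio. -/

import Mathlib

/-- Iterates of the Gauss map starting from `x`: the `j`-th complete quotient of `x`. -/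
noncomputable def gaussIter (x : ℝ) : ℕ → ℝ
  | 0 => x
  | j + 1 => (gaussIter x j - ⌊gaussIter x j⌋)⁻¹

/-- The `j`-th partial quotient (for `j ≥ 1`) of the continued fraction expansion
`x = [x₁; x₂, x₃, …]` of a real number `x`, so `x₁ = ⌊x⌋`. -/
noncomputable def partialQuotient (x : ℝ) (j : ℕ) : ℤ := ⌊gaussIter x (j - 1)⌋

/-!
If `x` and `y` share their first two partial quotients `a, b`, write `x = a + 1/x'` with
`x' = b + 1/x''`, and likewise for `y`; here `b ≥ 1` and `x'', y'' > 1`. Then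
`|x - y| = |x'' - y''| / ((x' x'') (y' y''))` and `x' x'' = b x'' + 1 ≥ 2`, so two partial quotients
shrink the distance by a factor `4`, and sharing `k` of them forces `|x - y| ≤ 4 / 2 ^ k`. The
logarithm is `1`-Lipschitz on `[1, ∞)`, so the sum is below `∑ 4 / 2 ^ k < 4`, while
`θ³ = 2θ + 1 < 5`.
-/

open Finset Int Real

lemma gaussIter_succ' (x : ℝ) (n : ℕ) : gaussIter x (n + 1) = gaussIter (fract x)⁻¹ n := by
  induction n with
  | zero => simp [gaussIter, self_sub_floor]
  | succ n ih => rw [gaussIter, ih]; rfl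

lemma partialQuotient_one (x : ℝ) : partialQuotient x 1 = ⌊x⌋ := rfl

lemma partialQuotient_succ (x : ℝ) {j : ℕ} (hj : 1 ≤ j) :
    partialQuotient x (j + 1) = partialQuotient (fract x)⁻¹ j := by
  obtain ⟨n, rfl⟩ := Nat.exists_eq_add_of_le' hj
  simp only [partialQuotient, Nat.add_sub_cancel, gaussIter_succ']

lemma one_lt_inv_fract {x : ℝ} (h : fract x ≠ 0) : 1 < (fract x)⁻¹ :=
  (one_lt_inv₀ ((fract_nonneg x).lt_of_ne' h)).2 (fract_lt_one x)

lemma floor_inv_fract_eq_zero_iff (x : ℝ) : ⌊(fract x)⁻¹⌋ = 0 ↔ fract x = 0 := by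
  refine ⟨fun h => ?_, fun h => by simp [h]⟩
  by_contra hx
  have : (1 : ℤ) ≤ ⌊(fract x)⁻¹⌋ := le_floor.2 (by exact_mod_cast (one_lt_inv_fract hx).le)
  omega

lemma two_le_mul_inv_fract {z : ℝ} (hz : 1 ≤ z) (h : fract z ≠ 0) : 2 ≤ z * (fract z)⁻¹ := by
  have hfloor : (1 : ℝ) ≤ ⌊z⌋ := by exact_mod_cast le_floor.2 (by exact_mod_cast hz)
  have hinv := one_lt_inv_fract h
  calc 2 ≤ (⌊z⌋ : ℝ) * (fract z)⁻¹ + 1 := by nlinarith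
    _ = (⌊z⌋ + fract z) * (fract z)⁻¹ := by field_simp
    _ = z * (fract z)⁻¹ := by rw [floor_add_fract]

lemma abs_sub_eq_of_floor_eq {x y : ℝ} (hfloor : ⌊x⌋ = ⌊y⌋) (hx : fract x ≠ 0)
    (hy : fract y ≠ 0) :
    |x - y| = |(fract x)⁻¹ - (fract y)⁻¹| / ((fract x)⁻¹ * (fract y)⁻¹) := by
  have hsub : x - y = fract x - fract y := by
    rw [← self_sub_floor, ← self_sub_floor, hfloor]; ring
  have hpos : 0 < (fract x)⁻¹ * (fract y)⁻¹ :=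
    mul_pos (one_pos.trans (one_lt_inv_fract hx)) (one_pos.trans (one_lt_inv_fract hy))
  have hinv : fract x - fract y = ((fract y)⁻¹ - (fract x)⁻¹) / ((fract x)⁻¹ * (fract y)⁻¹) := by
    field_simp
  rw [hsub, hinv, abs_div, abs_sub_comm, abs_of_pos hpos]

def PartialQuotientsAgree (k : ℕ) (x y : ℝ) : Prop :=
  ∀ j, 1 ≤ j → j ≤ k → partialQuotient x j = partialQuotient y j

namespace PartialQuotientsAgree

variable {k l : ℕ} {x y : ℝ}

lemma mono (h : PartialQuotientsAgree k x y) (hlk : l ≤ k) : PartialQuotientsAgree l x y :=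
  fun j hj hjl => h j hj (hjl.trans hlk)

lemma floor_eq (h : PartialQuotientsAgree k x y) (hk : 1 ≤ k) : ⌊x⌋ = ⌊y⌋ := by
  simpa only [partialQuotient_one] using h 1 le_rfl hk

lemma inv_fract (h : PartialQuotientsAgree (k + 1) x y) :
    PartialQuotientsAgree k (fract x)⁻¹ (fract y)⁻¹ := fun j hj hjk => by
  simpa only [partialQuotient_succ _ hj] using h (j + 1) (by omega) (by omega)

lemma fract_eq_zero_iff (h : PartialQuotientsAgree 2 x y) : fract x = 0 ↔ fract y = 0 := by
  rw [← floor_inv_fract_eq_zero_iff, ← floor_inv_fract_eq_zero_iff, h.inv_fract.floor_eq le_rfl]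

lemma eq_of_fract_eq_zero (h : PartialQuotientsAgree 2 x y) (hx : fract x = 0) : x = y := by
  rw [← floor_add_fract x, ← floor_add_fract y, h.floor_eq one_le_two, hx, h.fract_eq_zero_iff.1 hx]

lemma abs_sub_le_div_four (h : PartialQuotientsAgree 3 x y) :
    |x - y| ≤ |(fract (fract x)⁻¹)⁻¹ - (fract (fract y)⁻¹)⁻¹| / 4 := by
  have h2 : PartialQuotientsAgree 2 x y := h.mono (by norm_num)
  by_cases hx : fract x = 0
  · rw [h2.eq_of_fract_eq_zero hx, sub_self, abs_zero]; positivity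
  have hy : fract y ≠ 0 := fun hy => hx (h2.fract_eq_zero_iff.2 hy)
  have h' : PartialQuotientsAgree 2 (fract x)⁻¹ (fract y)⁻¹ := h.inv_fract
  rw [abs_sub_eq_of_floor_eq (h.floor_eq (by norm_num)) hx hy]
  by_cases hx' : fract (fract x)⁻¹ = 0
  · rw [h'.eq_of_fract_eq_zero hx', sub_self, abs_zero, zero_div]; positivity
  have hy' : fract (fract y)⁻¹ ≠ 0 := fun hy' => hx' (h'.fract_eq_zero_iff.2 hy')
  rw [abs_sub_eq_of_floor_eq (h'.floor_eq one_le_two) hx' hy', div_div]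
  have hx4 := two_le_mul_inv_fract (one_lt_inv_fract hx).le hx'
  have hy4 := two_le_mul_inv_fract (one_lt_inv_fract hy).le hy'
  gcongr
  nlinarith

end PartialQuotientsAgree

theorem abs_sub_le_of_partialQuotientsAgree {k : ℕ} {x y : ℝ} (hk : 1 ≤ k)
    (h : PartialQuotientsAgree k x y) : |x - y| ≤ 4 / 2 ^ k := by
  induction k using Nat.strong_induction_on generalizing x y with
  | _ k ih =>
  obtain hk2 | ⟨m, rfl⟩ : k ≤ 2 ∨ ∃ m, k = m + 3 := by
    rcases le_or_gt k 2 with hk2 | hk2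
    · exact .inl hk2
    · exact .inr ⟨k - 3, by omega⟩
  · calc |x - y| ≤ 1 := (abs_sub_lt_one_of_floor_eq_floor (h.floor_eq hk)).le
      _ ≤ 4 / 2 ^ 2 := by norm_num
      _ ≤ 4 / 2 ^ k := by gcongr; norm_num
  · calc |x - y| ≤ |(fract (fract x)⁻¹)⁻¹ - (fract (fract y)⁻¹)⁻¹| / 4 :=
          (h.mono (by omega)).abs_sub_le_div_four
      _ ≤ 4 / 2 ^ (m + 1) / 4 := by
          gcongr
          exact ih (m + 1) (by omega) (by omega) h.inv_fract.inv_fract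
      _ = 4 / 2 ^ (m + 3) := by ring

lemma abs_log_sub_log_le_abs_sub {x y : ℝ} (hx : 1 ≤ x) (hy : 1 ≤ y) :
    |log x - log y| ≤ |x - y| := by
  wlog hyx : y ≤ x generalizing x y
  · rw [abs_sub_comm, abs_sub_comm x]
    exact this hy hx (le_of_not_ge hyx)
  have hy0 : 0 < y := by linarith
  rw [abs_of_nonneg (sub_nonneg.2 (log_le_log hy0 hyx)), abs_of_nonneg (sub_nonneg.2 hyx),
    ← log_div (by positivity) hy0.ne']
  calc log (x / y) ≤ x / y - 1 := log_le_sub_one_of_pos (by positivity)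
    _ = (x - y) / y := by field_simp
    _ ≤ x - y := div_le_self (sub_nonneg.2 hyx) hy

lemma sum_Icc_div_two_pow (c : ℝ) (r : ℕ) : ∑ k ∈ Icc 1 r, c / 2 ^ k = c - c / 2 ^ r := by
  induction r with
  | zero => simp
  | succ r ih => rw [sum_Icc_succ_top (by omega), ih]; field_simp; ring

lemma four_lt_twenty_div_goldenRatio_pow_three : 4 < 20 / goldenRatio ^ 3 := by
  have hcube : goldenRatio ^ 3 = 2 * goldenRatio + 1 := by
    linear_combination (goldenRatio + 1) * goldenRatio_sq
  rw [hcube, lt_div_iff₀ (by linarith [goldenRatio_pos])]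
  linarith [goldenRatio_lt_two]

theorem statement11_general (r : ℕ) (x y : ℕ → ℝ)
    (hx : ∀ k, 1 ≤ k → k ≤ r → 1 ≤ x k) (hy : ∀ k, 1 ≤ k → k ≤ r → 1 ≤ y k)
    (hagree : ∀ k, 1 ≤ k → k ≤ r → ∀ j, 1 ≤ j → j ≤ k →
      partialQuotient (x k) j = partialQuotient (y k) j) :
    ∑ k ∈ Finset.Icc 1 r, |Real.log (x k) - Real.log (y k)| <
      20 / ((1 + Real.sqrt 5) / 2) ^ 3 := by
  calc ∑ k ∈ Icc 1 r, |log (x k) - log (y k)| ≤ ∑ k ∈ Icc 1 r, 4 / 2 ^ k := by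
        refine sum_le_sum fun k hk => ?_
        obtain ⟨hk1, hkr⟩ := mem_Icc.1 hk
        exact (abs_log_sub_log_le_abs_sub (hx k hk1 hkr) (hy k hk1 hkr)).trans
          (abs_sub_le_of_partialQuotientsAgree hk1 (hagree k hk1 hkr))
    _ = 4 - 4 / 2 ^ r := sum_Icc_div_two_pow 4 r
    _ < 4 := sub_lt_self 4 (by positivity)
    _ < 20 / goldenRatio ^ 3 := four_lt_twenty_div_goldenRatio_pow_three

/-- Lemma 6: if for every `1 ≤ k ≤ r` the real numbers `x k, y k ∈ [1, ∞)` have the same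
first `k` partial quotients, then `∑_{k=1}^{r} |log (x k) - log (y k)| < 20/θ³`,
where `θ = (1+√5)/2`. -/
theorem statement11 (r : ℕ) (hr : 1 ≤ r) (x y : ℕ → ℝ)
    (hx : ∀ k, 1 ≤ k → k ≤ r → 1 ≤ x k) (hy : ∀ k, 1 ≤ k → k ≤ r → 1 ≤ y k)
    (hagree : ∀ k, 1 ≤ k → k ≤ r → ∀ j, 1 ≤ j → j ≤ k →
      partialQuotient (x k) j = partialQuotient (y k) j) :
    ∑ k ∈ Finset.Icc 1 r, |Real.log (x k) - Real.log (y k)| <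
      20 / ((1 + Real.sqrt 5) / 2) ^ 3 :=
  statement11_general r x y hx hy hagree
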